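/- In the subdivided-star gerrymandering instance constructed from a Set Cover instance (U,F,t): for any district-partition 𝒟 of G into k = t+4 districts, if the candidate q does not win the district of 𝒟 containing the root r, then 𝒟 is not satisfying for the preferred candidate p (that is, some candidate other than p leads at least as many districts as p wins). -/

import Mathlib

attribute [local instance] Classical.propDecidable

/-- Candidate `c` *leads* district `D` (unweighted): `c`'s vote count is at least that of
every candidate. -/
def leadsIn {V C : Type*} (χ : V → C) (c : C) (D : Finset V) : Prop :=
  ∀ c' : C, (D.filter fun x => χ x = c').card ≤ (D.filter fun x => χ x = c).card

/-- Candidate `c` *wins* district `D` (unweighted): `c`'s vote count strictly exceeds that of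
every other candidate. -/
def winsIn {V C : Type*} (χ : V → C) (c : C) (D : Finset V) : Prop :=
  ∀ c' : C, c' ≠ c → (D.filter fun x => χ x = c').card < (D.filter fun x => χ x = c).card

/-- A district-partition of `G` into `k` districts: `k` pairwise-disjoint nonempty vertex sets
covering all vertices, each inducing a connected subgraph. -/
def IsDistrictPartition {V : Type*} (G : SimpleGraph V) (k : ℕ) (P : Finset (Finset V)) : Prop :=
  P.card = k ∧ (∀ D ∈ P, D.Nonempty) ∧
    (∀ D ∈ P, ∀ D' ∈ P, D ≠ D' → Disjoint D D') ∧
    (∀ x : V, ∃ D ∈ P, x ∈ D) ∧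
    (∀ D ∈ P, (G.induce (D : Set V)).Connected)

/-- A district-partition is *satisfying* for the preferred candidate `p` if `p` wins strictly
more districts than any other candidate leads. -/
def SatisfyingFor {V C : Type*} (χ : V → C) (p : C) (P : Finset (Finset V)) : Prop :=
  ∀ q : C, q ≠ p →
    (P.filter fun D => leadsIn χ q D).card < (P.filter fun D => winsIn χ p D).card

/-- Vertices of the subdivided-star gerrymandering instance: the root `r`; branch 1 vertices
`c_1, c_2, u_1, …, u_n`; branch 2 vertices `w_1, …, w_{t-1}`; and, on each of the `t`
selection branches `s`, the initial vertices `v_0^1, …, v_0^n` (constructor `v0`), the group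
vertices `x_i` and `v_i^j` for `i ∈ [m]` (group `g_i`), and the final vertices
`y_0, …, y_m`. -/
inductive VS (n m t : ℕ) : Type where
  | root
  | c1
  | c2
  | u (j : Fin n)
  | w (i : Fin (t - 1))
  | v0 (s : Fin t) (j : Fin n)
  | x (s : Fin t) (i : Fin m)
  | v (s : Fin t) (i : Fin m) (j : Fin n)
  | y (s : Fin t) (i : Fin (m + 1))
  deriving DecidableEq, Fintype

/-- Candidates of the subdivided-star instance: the preferred candidate `p`, the ally `q`,
element candidates `a_j` for `j ∈ [n]`, and branch candidates `b_s` for `s ∈ [t]`. -/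
inductive CS (n t : ℕ) : Type where
  | p
  | q
  | a (j : Fin n)
  | b (s : Fin t)
  deriving DecidableEq

/-- Candidate preferences of the subdivided-star instance. -/
def chiS {n m t : ℕ} : VS n m t → CS n t
  | .root => .q
  | .c1 => .p
  | .c2 => .p
  | .u j => .a j
  | .w _ => .q
  | .v0 _ j => .a j
  | .x _ _ => .q
  | .v _ _ j => .a j
  | .y s _ => .b s

/-- Position of each non-root vertex along its branch, as a pair
(branch index, 0-based distance from the root along the branch minus one); the vertex at
position 0 of each branch is adjacent to the root.  Branch 0 is `c_1, c_2, u_1, …, u_n`;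
branch 1 is `w_1, …, w_{t-1}`; branch `2 + s` is selection branch `s`, ordered as
`v_0^1, …, v_0^n`, then groups `g_1, …, g_m` (group `g_i` consists of the vertices `v_i^j`
with `e_j ∉ S_i` in increasing order of `j`, then `x_i`, then the vertices `v_i^j` with
`e_j ∈ S_i` in increasing order of `j`), then `y_0, …, y_m`. -/
def posS {n m t : ℕ} (S : Fin m → Finset (Fin n)) : VS n m t → Option (ℕ × ℕ)
  | .root => none
  | .c1 => some (0, 0)
  | .c2 => some (0, 1)
  | .u j => some (0, 2 + (j : ℕ))
  | .w i => some (1, (i : ℕ))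
  | .v0 s j => some (2 + (s : ℕ), (j : ℕ))
  | .x s i => some (2 + (s : ℕ), n + (i : ℕ) * (n + 1) + (n - (S i).card))
  | .v s i j => some (2 + (s : ℕ), n + (i : ℕ) * (n + 1) +
      (if j ∈ S i then n - (S i).card + 1 + ((S i).filter fun j' => j' < j).card
       else ((S i)ᶜ.filter fun j' => j' < j).card))
  | .y s i => some (2 + (s : ℕ), n + m * (n + 1) + (i : ℕ))

/-- The subdivided star: the root is adjacent to the vertex at position 0 of each branch, and
vertices at consecutive positions of the same branch are adjacent. -/
def GS {n m t : ℕ} (S : Fin m → Finset (Fin n)) : SimpleGraph (VS n m t) :=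
  SimpleGraph.fromRel (fun a b =>
    (a = VS.root ∧ ∃ br, posS S b = some (br, 0)) ∨
    (∃ br k, posS S a = some (br, k) ∧ posS S b = some (br, k + 1)))

/-!
Only `c₁` and `c₂` vote for `p`, so `p` wins at most two districts, while at least `t + 2`
districts contain neither of them and are led by someone other than `p`. A satisfying partition
therefore has `p` winning exactly two districts, which forces `{c₁}` and `{c₂}` to be districts,
and every other candidate leads at most one district.

If `q` does not win the root district, some candidate other than `q` (and, as the root district
contains neither `c₁` nor `c₂`, other than `p`) leads it. An `a_j` cannot: it also leads the
district of `u_j`, which is trapped between `c₂` and the end of branch 1 and so consists of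
`u`-vertices only. A `b_s` cannot either: outvoting the root's `q`, the root district reaches
some `y_i` of selection branch `s`, hence contains the whole branch before it, so every `a_j`
(through `v_0^j` and all `v_i^j`) gets at least `m + 1` votes, whereas `b_s` has only `m + 1`
voters at all; hence `a_j` leads it too. For `n = 0` there are no `a_j`, and instead the `t + 2`
districts avoiding `c₁, c₂` would need distinct leaders among the `t + 1` candidates
`q, b_1, …, b_t`.
-/

open Finset

section Voting

variable {V C : Type*} {χ : V → C}

variable (χ) in
noncomputable def votes (D : Finset V) (c : C) : ℕ := #(D.filter fun x => χ x = c)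

theorem winsIn_iff {c : C} {D : Finset V} :
    winsIn χ c D ↔ ∀ c', c' ≠ c → votes χ D c' < votes χ D c := Iff.rfl

theorem votes_pos_iff {D : Finset V} {c : C} : 0 < votes χ D c ↔ ∃ x ∈ D, χ x = c := by
  simp [votes, card_pos, filter_nonempty_iff]

theorem card_le_votes {A D : Finset V} {c : C} (hAD : A ⊆ D) (hA : ∀ x ∈ A, χ x = c) :
    #A ≤ votes χ D c :=
  card_le_card fun x hx => mem_filter.2 ⟨hAD hx, hA x hx⟩

theorem votes_le_card {B D : Finset V} {c : C} (hB : ∀ x ∈ D, χ x = c → x ∈ B) :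
    votes χ D c ≤ #B :=
  card_le_card fun x hx => hB x (mem_filter.1 hx).1 (mem_filter.1 hx).2

theorem exists_mem_leadsIn {D : Finset V} (hD : D.Nonempty) : ∃ x ∈ D, leadsIn χ (χ x) D := by
  obtain ⟨x, hx, hmax⟩ := D.exists_max_image (fun x => votes χ D (χ x)) hD
  refine ⟨x, hx, fun c => ?_⟩
  rcases (votes χ D c).eq_zero_or_pos with h | h
  · exact h.trans_le (Nat.zero_le _)
  · obtain ⟨y, hy, rfl⟩ := votes_pos_iff.1 h
    exact hmax y hy

theorem exists_ne_leadsIn_of_not_winsIn {D : Finset V} {c : C} (hD : D.Nonempty)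
    (h : ¬ winsIn χ c D) : ∃ c' ≠ c, leadsIn χ c' D := by
  obtain ⟨x, -, hx⟩ := exists_mem_leadsIn (χ := χ) hD
  by_cases hxc : χ x = c
  · subst hxc
    obtain ⟨c', hc', hle⟩ : ∃ c' ≠ χ x, votes χ D (χ x) ≤ votes χ D c' := by
      simpa [winsIn_iff] using h
    exact ⟨c', hc', fun c'' => (hx c'').trans hle⟩
  · exact ⟨χ x, hxc, hx⟩

theorem exists_mem_of_winsIn {D : Finset V} {c c' : C} (hc : c' ≠ c) (h : winsIn χ c D) :
    ∃ x ∈ D, χ x = c :=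
  votes_pos_iff.1 (Nat.zero_lt_of_lt (h c' hc))

theorem leadsIn_of_injOn {D : Finset V} {x : V} (hχ : Set.InjOn χ D) (hx : x ∈ D) :
    leadsIn χ (χ x) D := by
  intro c
  have hle : votes χ D c ≤ 1 :=
    card_le_one.2 fun y hy z hz => hχ (mem_filter.1 hy).1 (mem_filter.1 hz).1
      ((mem_filter.1 hy).2.trans (mem_filter.1 hz).2.symm)
  exact hle.trans (card_le_votes (singleton_subset_iff.2 hx) (by simp))

theorem eq_singleton_of_winsIn {D : Finset V} {x : V} (hw : winsIn χ (χ x) D) (hx : x ∈ D)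
    (hunique : ∀ y ∈ D, χ y = χ x → y = x) : D = {x} := by
  have hone : votes χ D (χ x) ≤ 1 :=
    card_le_one.2 fun y hy z hz =>
      (hunique y (mem_filter.1 hy).1 (mem_filter.1 hy).2).trans
        (hunique z (mem_filter.1 hz).1 (mem_filter.1 hz).2).symm
  refine eq_singleton_iff_unique_mem.2 ⟨hx, fun y hy => by_contra fun hyx => ?_⟩
  have hy1 : 1 ≤ votes χ D (χ y) := card_le_votes (singleton_subset_iff.2 hy) (by simp)
  have := winsIn_iff.1 hw (χ y) fun h => hyx (hunique y hy h)
  omega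

variable {P : Finset (Finset V)}

theorem card_filter_exists_mem_le (hP : ∀ D ∈ P, ∀ D' ∈ P, D ≠ D' → Disjoint D D')
    {c : C} [DecidablePred fun D : Finset V => ∃ x ∈ D, χ x = c] {A : Finset V}
    (hA : ∀ x, χ x = c → x ∈ A) :
    #(P.filter fun D => ∃ x ∈ D, χ x = c) ≤ #A := by
  refine card_le_card_of_forall_subsingleton (fun D x => x ∈ D) (fun D hD => ?_) ?_
  · obtain ⟨x, hx, hxc⟩ := (mem_filter.1 hD).2
    exact ⟨x, hA x hxc, hx⟩
  · intro x _ D hD D' hD'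
    by_contra hne
    exact disjoint_left.1 (hP D (mem_filter.1 hD.1).1 D' (mem_filter.1 hD'.1).1 hne) hD.2 hD'.2

theorem card_le_card_of_leadsIn {T : Finset C} (hP : ∀ D ∈ P, ∃ c ∈ T, leadsIn χ c D)
    (hT : ∀ c ∈ T, #(P.filter fun D => leadsIn χ c D) ≤ 1) : #P ≤ #T :=
  card_le_card_of_forall_subsingleton (fun D c => leadsIn χ c D) hP fun c hc D hD D' hD' =>
    card_le_one.1 (hT c hc) D (mem_filter.2 hD) D' (mem_filter.2 hD')

theorem notMem_of_singleton_mem (hP : ∀ D ∈ P, ∀ D' ∈ P, D ≠ D' → Disjoint D D') {x y : V}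
    (hx : {x} ∈ P) {D : Finset V} (hD : D ∈ P) (hy : y ∈ D) (hyx : y ≠ x) : x ∉ D := fun hxD =>
  disjoint_left.1 (hP D hD {x} hx fun h => hyx (mem_singleton.1 (h ▸ hy))) hxD
    (mem_singleton_self x)

end Voting

theorem card_filter_lt_lt {α : Type*} [Preorder α] [DecidableLT α] {s : Finset α} {a : α}
    (ha : a ∈ s) : #(s.filter (· < a)) < #s :=
  card_lt_card (filter_ssubset.2 ⟨a, ha, lt_irrefl a⟩)

theorem strictMonoOn_card_filter_lt {α : Type*} [Preorder α] [DecidableLT α] (s : Finset α) :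
    StrictMonoOn (fun a => #(s.filter (· < a))) s := by
  intro a ha b _ hab
  refine card_lt_card ((ssubset_iff_of_subset ?_).2 ⟨a, mem_filter.2 ⟨ha, hab⟩, by simp⟩)
  exact fun c hc => mem_filter.2 ⟨(mem_filter.1 hc).1, (mem_filter.1 hc).2.trans hab⟩

theorem SimpleGraph.mem_of_forall_walk_mem_support {V : Type*} {G : SimpleGraph V} {U : Set V}
    (hU : (G.induce U).Connected) {a b v : V} (ha : a ∈ U) (hb : b ∈ U)
    (hv : ∀ w : G.Walk a b, v ∈ w.support) : v ∈ U := by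
  obtain ⟨w⟩ := hU.preconnected ⟨a, ha⟩ ⟨b, hb⟩
  obtain ⟨x, -, rfl⟩ := List.mem_map.1 <|
    (Walk.support_map _ w) ▸ hv (w.map (Embedding.induce U).toHom)
  exact x.2

section Star

variable {n m t : ℕ} {S : Fin m → Finset (Fin n)}

/-- The offset of `x_i` (`none`) and of `v_i^j` (`some j`) inside group `g_i`, as in `posS`. -/
noncomputable def groupOffset (S : Fin m → Finset (Fin n)) (i : Fin m) : Option (Fin n) → ℕ
  | none => n - #(S i)
  | some j => if j ∈ S i then n - #(S i) + 1 + #((S i).filter fun j' => j' < j)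
      else #((S i)ᶜ.filter fun j' => j' < j)

noncomputable def groupPos (S : Fin m → Finset (Fin n)) (i : Fin m) (o : Option (Fin n)) : ℕ :=
  n + i * (n + 1) + groupOffset S i o

theorem posS_x (s : Fin t) (i : Fin m) :
    posS S (.x s i) = some (2 + (s : ℕ), groupPos S i none) := rfl

theorem posS_v (s : Fin t) (i : Fin m) (j : Fin n) :
    posS S (.v s i j) = some (2 + (s : ℕ), groupPos S i (some j)) := rfl

theorem groupOffset_le (i : Fin m) (o : Option (Fin n)) : groupOffset S i o ≤ n := by
  have hS : #(S i) ≤ n := (card_le_univ (S i)).trans_eq (Fintype.card_fin n)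
  rcases o with _ | j
  · exact Nat.sub_le n _
  dsimp only [groupOffset]
  split_ifs with hj
  · have := card_filter_lt_lt hj
    omega
  · have := card_filter_lt_lt (mem_compl.2 hj)
    rw [card_compl, Fintype.card_fin] at this
    omega

theorem groupOffset_injective (i : Fin m) : Function.Injective (groupOffset S i) := by
  have hout : ∀ j ∉ S i, #((S i)ᶜ.filter fun j' => j' < j) < n - #(S i) := fun j hj => by
    simpa [card_compl] using card_filter_lt_lt (mem_compl.2 hj)
  have hrank := fun s : Finset (Fin n) => (strictMonoOn_card_filter_lt s).injOn
  rintro (_ | j) (_ | j') h <;> dsimp only [groupOffset] at h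
  · rfl
  · split_ifs at h with hj'
    · omega
    · exact absurd h (hout j' hj').ne'
  · split_ifs at h with hj
    · omega
    · exact absurd h (hout j hj).ne
  · split_ifs at h with hj hj' hj'
    · exact congrArg some (hrank _ hj hj' (Nat.add_left_cancel h))
    · have := hout j' hj'; omega
    · have := hout j hj; omega
    · exact congrArg some (hrank _ (mem_compl.2 hj) (mem_compl.2 hj') h)

theorem le_groupPos (i : Fin m) (o : Option (Fin n)) : n ≤ groupPos S i o := by
  unfold groupPos; omega

theorem groupPos_lt (i : Fin m) (o : Option (Fin n)) : groupPos S i o < n + m * (n + 1) := by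
  have := groupOffset_le (S := S) i o
  have : (i + 1) * (n + 1) ≤ m * (n + 1) := Nat.mul_le_mul_right _ i.isLt
  unfold groupPos; nlinarith

theorem groupPos_inj {i i' : Fin m} {o o' : Option (Fin n)} :
    groupPos S i o = groupPos S i' o' ↔ i = i' ∧ o = o' := by
  refine ⟨fun h => ?_, fun h => h.1 ▸ h.2 ▸ rfl⟩
  have h' : groupOffset S i o + (n + 1) * i = groupOffset S i' o' + (n + 1) * i' := by
    unfold groupPos at h; linarith
  have hdm := fun (o i : ℕ) (ho : o ≤ n) =>
    (Nat.div_mod_unique (c := o) (d := i) (Nat.succ_pos n)).2 ⟨rfl, Nat.lt_succ_of_le ho⟩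
  obtain ⟨hi, ho⟩ := hdm _ i (groupOffset_le i o)
  obtain ⟨hi', ho'⟩ := hdm _ i' (groupOffset_le i' o')
  rw [h'] at hi ho
  obtain rfl : i = i' := Fin.ext (hi.symm.trans hi')
  exact ⟨rfl, groupOffset_injective i (ho.symm.trans ho')⟩

theorem val_ne_groupPos (j : Fin n) (i : Fin m) (o : Option (Fin n)) :
    (j : ℕ) ≠ groupPos S i o :=
  (j.isLt.trans_le (le_groupPos i o)).ne

theorem groupPos_ne_add (i : Fin m) (o : Option (Fin n)) (k : ℕ) :
    groupPos S i o ≠ n + m * (n + 1) + k :=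
  ((groupPos_lt i o).trans_le (Nat.le_add_right _ _)).ne

theorem posS_injective : Function.Injective (posS (t := t) S) := by
  intro a b h
  cases a <;> cases b <;> (try simp only [posS_x, posS_v] at h) <;>
    simp [posS, groupPos_inj, Fin.val_inj, val_ne_groupPos, groupPos_ne_add,
      (val_ne_groupPos _ _ _).symm, (groupPos_ne_add _ _ _).symm] at h ⊢
  all_goals first | exact h | omega

theorem adj_posS {a b : VS n m t} (hab : (GS S).Adj a b) {br k : ℕ}
    (ha : posS S a = some (br, k)) :
    (b = .root ∧ k = 0) ∨ posS S b = some (br, k + 1) ∨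
      ∃ k', k = k' + 1 ∧ posS S b = some (br, k') := by
  simp only [GS, SimpleGraph.fromRel_adj] at hab
  rcases hab.2 with (⟨rfl, -⟩ | ⟨br', k', ha', hb⟩) | (⟨rfl, br', hb⟩ | ⟨br', k', hb, ha'⟩)
  · simp [posS] at ha
  · obtain ⟨rfl, rfl⟩ := Prod.mk.inj (Option.some.inj (ha.symm.trans ha'))
    exact Or.inr (Or.inl hb)
  · obtain ⟨-, rfl⟩ := Prod.mk.inj (Option.some.inj (ha.symm.trans hb))
    exact Or.inl ⟨rfl, rfl⟩
  · obtain ⟨rfl, rfl⟩ := Prod.mk.inj (Option.some.inj (ha.symm.trans ha'))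
    exact Or.inr (Or.inr ⟨k', rfl, hb⟩)

theorem mem_support_of_posS_le {a b v : VS n m t} (w : (GS S).Walk a b) {br ka kv : ℕ}
    (ha : posS S a = some (br, ka)) (hv : posS S v = some (br, kv)) (hva : kv ≤ ka)
    (hb : ∀ k, posS S b = some (br, k) → k ≤ kv) : v ∈ w.support := by
  induction w generalizing ka with
  | nil =>
    obtain rfl : kv = ka := le_antisymm hva (hb ka ha)
    simp [posS_injective (hv.trans ha.symm)]
  | cons hadj w ih =>
    rw [SimpleGraph.Walk.support_cons, List.mem_cons]
    rcases hva.eq_or_lt with rfl | hlt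
    · exact Or.inl (posS_injective (hv.trans ha.symm))
    rcases adj_posS hadj ha with ⟨-, rfl⟩ | hnext | ⟨k', rfl, hprev⟩
    · omega
    · exact Or.inr (ih hnext (by omega) hb)
    · exact Or.inr (ih hprev (by omega) hb)

variable {U : Finset (VS n m t)}

theorem mem_of_posS_le (hU : ((GS S).induce (U : Set (VS n m t))).Connected)
    {a b v : VS n m t} (ha : a ∈ U) (hb : b ∈ U) {br ka kv : ℕ}
    (hpa : posS S a = some (br, ka)) (hpv : posS S v = some (br, kv)) (hva : kv ≤ ka)
    (hpb : ∀ k, posS S b = some (br, k) → k ≤ kv) : v ∈ U :=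
  SimpleGraph.mem_of_forall_walk_mem_support hU ha hb fun w =>
    mem_support_of_posS_le w hpa hpv hva hpb

theorem mem_of_y_mem (hU : ((GS S).induce (U : Set (VS n m t))).Connected)
    (hroot : VS.root ∈ U) {s : Fin t} {i : Fin (m + 1)} (hy : VS.y s i ∈ U) {v : VS n m t}
    {k : ℕ} (hv : posS S v = some (2 + (s : ℕ), k)) (hk : k ≤ n + m * (n + 1)) : v ∈ U :=
  mem_of_posS_le hU hy hroot rfl hv (hk.trans (Nat.le_add_right _ _)) (by simp [posS])

theorem exists_eq_u_of_mem (hU : ((GS S).induce (U : Set (VS n m t))).Connected)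
    {j : Fin n} (hu : VS.u j ∈ U) (hc2 : VS.c2 ∉ U) {z : VS n m t} (hz : z ∈ U) :
    ∃ j', z = VS.u j' := by
  by_contra hzu
  refine hc2 (mem_of_posS_le hU hu hz rfl rfl (by omega) fun k hk => ?_)
  cases z <;> simp [posS] at hk hzu <;> omega

theorem leadsIn_a_of_u_mem (hU : ((GS S).induce (U : Set (VS n m t))).Connected)
    {j : Fin n} (hu : VS.u j ∈ U) (hc2 : VS.c2 ∉ U) : leadsIn chiS (CS.a j) U := by
  refine leadsIn_of_injOn (fun x hx y hy hxy => ?_) hu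
  obtain ⟨jx, rfl⟩ := exists_eq_u_of_mem hU hu hc2 hx
  obtain ⟨jy, rfl⟩ := exists_eq_u_of_mem hU hu hc2 hy
  simpa [chiS] using hxy

theorem chiS_eq_p_iff {x : VS n m t} : chiS x = CS.p ↔ x = .c1 ∨ x = .c2 := by
  cases x <;> simp [chiS]

theorem chiS_eq_b_iff {x : VS n m t} {s : Fin t} : chiS x = CS.b s ↔ ∃ i, x = VS.y s i := by
  cases x <;> simp [chiS, eq_comm]

theorem leadsIn_a_of_leadsIn_b (hU : ((GS S).induce (U : Set (VS n m t))).Connected)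
    (hroot : VS.root ∈ U) {s : Fin t} (hb : leadsIn chiS (CS.b s) U) (j : Fin n) :
    leadsIn chiS (CS.a j) U := by
  obtain ⟨y, hy, hys⟩ :=
    votes_pos_iff.1 ((votes_pos_iff.2 ⟨_, hroot, rfl⟩).trans_le (hb CS.q))
  obtain ⟨i, rfl⟩ := chiS_eq_b_iff.1 hys
  have ha : m + 1 ≤ votes chiS U (CS.a j) := by
    have hA : #(insert (VS.v0 s j) (univ.image fun i => VS.v s i j) : Finset (VS n m t)) =
        m + 1 := by
      rw [card_insert_of_notMem (by simp),
        card_image_of_injective _ fun _ _ h => (VS.v.inj h).2.1, card_fin]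
    refine hA ▸ card_le_votes (insert_subset ?_ ?_) (by simp [chiS])
    · exact mem_of_y_mem hU hroot hy rfl (by omega)
    · simpa [subset_iff] using
        fun i => mem_of_y_mem hU hroot hy (posS_v s i j) (groupPos_lt i (some j)).le
  have hby : votes chiS U (CS.b s) ≤ m + 1 := by
    refine (votes_le_card (B := univ.image (VS.y s)) fun z _ hz => ?_).trans
      (card_image_le.trans_eq (card_fin _))
    obtain ⟨i, rfl⟩ := chiS_eq_b_iff.1 hz
    exact mem_image_of_mem _ (mem_univ i)
  exact fun c => (hb c).trans (hby.trans ha)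

variable {P : Finset (Finset (VS n m t))}

theorem card_filter_exists_p_le (hdisj : ∀ D ∈ P, ∀ D' ∈ P, D ≠ D' → Disjoint D D') :
    #(P.filter fun D => ∃ x ∈ D, chiS x = CS.p) ≤ 2 :=
  (card_filter_exists_mem_le (χ := chiS) hdisj (A := {VS.c1, VS.c2})
    fun x hx => by rcases chiS_eq_p_iff.1 hx with rfl | rfl <;> simp).trans card_le_two

theorem not_leadsIn_p_of_root_mem (hdisj : ∀ D ∈ P, ∀ D' ∈ P, D ≠ D' → Disjoint D D')
    (hc1 : {VS.c1} ∈ P) (hc2 : {VS.c2} ∈ P) {D : Finset (VS n m t)} (hD : D ∈ P)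
    (hroot : VS.root ∈ D) : ¬ leadsIn chiS CS.p D := fun hp => by
  obtain ⟨x, hx, hxp⟩ := votes_pos_iff.1 ((votes_pos_iff.2 ⟨_, hroot, rfl⟩).trans_le (hp CS.q))
  rcases chiS_eq_p_iff.1 hxp with rfl | rfl
  · exact notMem_of_singleton_mem hdisj hc1 hD hroot (by simp) hx
  · exact notMem_of_singleton_mem hdisj hc2 hD hroot (by simp) hx

theorem card_winsIn_p_eq_two (hP : IsDistrictPartition (GS S) (t + 4) P)
    (hsat : SatisfyingFor chiS CS.p P) : #(P.filter fun D => winsIn chiS CS.p D) = 2 := by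
  obtain ⟨hcard, hne, hdisj, -, -⟩ := hP
  have hvoters := card_filter_exists_p_le hdisj
  have hle : #(P.filter fun D => winsIn chiS CS.p D) ≤ 2 :=
    (card_le_card (monotone_filter_right P fun D _ hD =>
      exists_mem_of_winsIn (c' := CS.q) (by simp) hD)).trans hvoters
  obtain ⟨D, hD, hfree⟩ : ∃ D ∈ P, ¬ ∃ x ∈ D, chiS x = CS.p := by
    by_contra! h
    rw [filter_true_of_mem h] at hvoters
    omega
  obtain ⟨x, hx, hlead⟩ := exists_mem_leadsIn (hne D hD)
  have hled : 0 < #(P.filter fun D' => leadsIn chiS (chiS x) D') :=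
    card_pos.2 ⟨D, mem_filter.2 ⟨hD, hlead⟩⟩
  have := hsat (chiS x) fun h => hfree ⟨x, hx, h⟩
  omega

theorem singleton_mem_of_card_winsIn_p_eq_two
    (hdisj : ∀ D ∈ P, ∀ D' ∈ P, D ≠ D' → Disjoint D D')
    (hwins : #(P.filter fun D => winsIn chiS CS.p D) = 2) : {VS.c1} ∈ P ∧ {VS.c2} ∈ P := by
  set W := P.filter fun D => winsIn chiS CS.p D
  have hsub : W ⊆ {{VS.c1}, {VS.c2}} := by
    intro E hE
    obtain ⟨E', hE', hEE'⟩ := exists_mem_ne (by omega : 1 < #W) E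
    obtain ⟨hEP, hEw⟩ := mem_filter.1 hE
    obtain ⟨x, hx, hxp⟩ := exists_mem_of_winsIn (c' := CS.q) (by simp) hEw
    obtain ⟨x', hx', hx'p⟩ := exists_mem_of_winsIn (c' := CS.q) (by simp) (mem_filter.1 hE').2
    have hx'E : x' ∉ E := disjoint_right.1 (hdisj E hEP E' (mem_filter.1 hE').1 hEE'.symm) hx'
    -- `x'` is a `p`-voter outside `E`, so `E` contains only one of `c₁, c₂`.
    have hE : E = {x} := by
      refine eq_singleton_of_winsIn (hxp ▸ hEw) hx fun y hy hyp => ?_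
      rcases chiS_eq_p_iff.1 (hyp.trans hxp) with rfl | rfl <;>
        rcases chiS_eq_p_iff.1 hxp with rfl | rfl <;>
        rcases chiS_eq_p_iff.1 hx'p with rfl | rfl <;> first | rfl | contradiction
    rcases chiS_eq_p_iff.1 hxp with rfl | rfl <;> simp [hE]
  have hW := eq_of_subset_of_card_le hsub (by rw [hwins]; exact card_le_two)
  exact ⟨(mem_filter.1 (hW ▸ by simp : {VS.c1} ∈ W)).1,
    (mem_filter.1 (hW ▸ by simp : {VS.c2} ∈ W)).1⟩

theorem not_satisfyingFor_of_n_eq_zero {S : Fin m → Finset (Fin 0)}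
    {P : Finset (Finset (VS 0 m t))} (hP : IsDistrictPartition (GS S) (t + 4) P) :
    ¬ SatisfyingFor chiS CS.p P := by
  intro hsat
  have hwins := card_winsIn_p_eq_two hP hsat
  obtain ⟨hcard, hne, hdisj, -, -⟩ := hP
  set F := P.filter fun D => ¬ ∃ x ∈ D, chiS x = CS.p
  have hF : t + 2 ≤ #F := by
    have h := card_filter_add_card_filter_not (s := P) fun D => ∃ x ∈ D, chiS x = CS.p
    have hF : #F = #(P.filter fun D => ¬ ∃ x ∈ D, chiS x = CS.p) := rfl
    have := card_filter_exists_p_le hdisj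
    omega
  set T : Finset (CS 0 t) := insert CS.q (univ.image CS.b)
  have hT : #T ≤ t + 1 :=
    (card_insert_le _ _).trans (Nat.succ_le_succ (card_image_le.trans_eq (card_fin t)))
  have hFT : #F ≤ #T := by
    refine card_le_card_of_leadsIn (χ := chiS) (fun D hD => ?_) fun c hc => ?_
    · obtain ⟨hDP, hfree⟩ := mem_filter.1 hD
      obtain ⟨x, hx, hlead⟩ := exists_mem_leadsIn (hne D hDP)
      refine ⟨chiS x, ?_, hlead⟩
      cases x with
      | c1 | c2 => exact absurd ⟨_, hx, rfl⟩ hfree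
      | u j | v0 _ j | v _ _ j => exact j.elim0
      | _ => simp [T, chiS]
    · have := hsat c (by rintro rfl; simp [T] at hc)
      have : #(F.filter fun D => leadsIn chiS c D) ≤ #(P.filter fun D => leadsIn chiS c D) :=
        card_le_card (filter_subset_filter _ (filter_subset _ P))
      omega
  omega

end Star

theorem star_q_must_win_root_general (n m t : ℕ)
    (S : Fin m → Finset (Fin n))
    (P : Finset (Finset (VS n m t)))
    (hP : IsDistrictPartition (GS S) (t + 4) P)
    (hlose : ∀ D ∈ P, VS.root ∈ D → ¬ winsIn chiS CS.q D) :
    ¬ SatisfyingFor chiS CS.p P := by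
  obtain rfl | hn := n.eq_zero_or_pos
  · exact not_satisfyingFor_of_n_eq_zero hP
  intro hsat
  have hwins := card_winsIn_p_eq_two hP hsat
  obtain ⟨-, -, hdisj, hcover, hconn⟩ := hP
  obtain ⟨hc1, hc2⟩ := singleton_mem_of_card_winsIn_p_eq_two hdisj hwins
  obtain ⟨Dr, hDr, hroot⟩ := hcover .root
  obtain ⟨c, hcq, hc⟩ := exists_ne_leadsIn_of_not_winsIn ⟨_, hroot⟩ (hlose Dr hDr hroot)
  obtain ⟨j, hj⟩ : ∃ j, leadsIn chiS (CS.a j) Dr := by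
    cases c with
    | p => exact absurd hc (not_leadsIn_p_of_root_mem hdisj hc1 hc2 hDr hroot)
    | q => exact absurd rfl hcq
    | a j => exact ⟨j, hc⟩
    | b s => exact ⟨⟨0, hn⟩, leadsIn_a_of_leadsIn_b (hconn Dr hDr) hroot hc _⟩
  obtain ⟨U, hU, hu⟩ := hcover (.u j)
  have hc2U := notMem_of_singleton_mem hdisj hc2 hU hu (by simp)
  have hUDr : U ≠ Dr := by
    rintro rfl
    simpa using exists_eq_u_of_mem (hconn U hU) hu hc2U hroot
  have hUj := leadsIn_a_of_u_mem (hconn U hU) hu hc2U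
  have h2 : 2 ≤ #(P.filter fun D => leadsIn chiS (CS.a j) D) := by
    rw [← card_pair hUDr]
    exact card_le_card (by simp [insert_subset_iff, hU, hDr, hj, hUj])
  have := hsat (CS.a j) (by simp)
  omega

/-- Observation 3 of the paper.  In the subdivided-star gerrymandering
instance constructed from a Set Cover instance `(U, F, t)`: for any district-partition `𝒟`
of `G` into `k = t + 4` districts, if the ally `q` does not win the district of `𝒟`
containing the root `r`, then `𝒟` is not satisfying for the preferred candidate `p`. -/
theorem star_q_must_win_root (n m t : ℕ) (htm : t ≤ m)
    (S : Fin m → Finset (Fin n))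
    (hcov : ∀ j : Fin n, ∃ i : Fin m, j ∈ S i)
    (P : Finset (Finset (VS n m t)))
    (hP : IsDistrictPartition (GS S) (t + 4) P)
    (hlose : ∀ D ∈ P, VS.root ∈ D → ¬ winsIn chiS CS.q D) :
    ¬ SatisfyingFor chiS CS.p P :=
  star_q_must_win_root_general n m t S P hP hlose
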